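/- Let ≺ be a left-invariant total order on B_3 whose positive cone is exactly the union of the set of σ1-positive elements and the set {σ2^k : k ≥ 1}. Then the cyclic subgroup ⟨σ2⟩ is ≺-convex and the restriction of ≺ to ⟨σ2⟩ is Conradian, while the restriction of ≺ to every ≺-convex subgroup strictly containing ⟨σ2⟩ (in particular to B_3 itself) is not Conradian. That is, ⟨σ2⟩ is the Conradian soul of ≺. -/

import Mathlib

/-!
A σ₁-positive braid is exactly one of the form `x σ₁ y` with `x`, `y` represented by words
free of `σ₁⁻¹`, and a braid represented by such a word is σ₁-positive or a power of `σ₂`.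
Since a braid and its inverse cannot both be positive, no power of `σ₂` is σ₁-positive, which
makes `⟨σ₂⟩` convex; being abelian it is Conradian. A convex subgroup `C` strictly above `⟨σ₂⟩`
contains a positive, hence σ₁-positive, braid `x σ₁ y`, and peeling off the factors by
convexity puts `σ₁` into `C`. Then `f = σ₁σ₂σ₁⁻²` and `g = σ₁σ₂σ₁⁻¹` are positive elements
of `C` (by the braid relation, `σ₁σ₂σ₁⁻ⁿ = σ₂⁻ⁿσ₁σ₂`) with `(f gᵏ)⁻¹ g = σ₁σ₂⁻ᵏ` positive
for every `k`, so `f gᵏ ≺ g` always and `C` is not Conradian.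
-/

/-- The single braid relation of `B₃`: σ₁σ₂σ₁ = σ₂σ₁σ₂. -/
def braidRels3 : Set (FreeGroup (Fin 2)) :=
  { FreeGroup.of 0 * FreeGroup.of 1 * FreeGroup.of 0 *
      (FreeGroup.of 1 * FreeGroup.of 0 * FreeGroup.of 1)⁻¹ }

/-- The braid group `B₃ = ⟨σ₁, σ₂ | σ₁σ₂σ₁ = σ₂σ₁σ₂⟩`. -/
abbrev B₃ : Type := PresentedGroup braidRels3

def σ₁ : B₃ := PresentedGroup.of 0
def σ₂ : B₃ := PresentedGroup.of 1

/-- A left-invariant total order (left order) on a group `G`. -/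
def IsLeftOrder {G : Type*} [Group G] (r : G → G → Prop) : Prop :=
  IsStrictTotalOrder G r ∧ ∀ h f g : G, r f g → r (h * f) (h * g)

/-- A subgroup `C` is convex for `r` if `f ≺ g ≺ h` with `f, h ∈ C` implies `g ∈ C`. -/
def IsConvexSubgroup {G : Type*} [Group G] (r : G → G → Prop) (C : Subgroup G) : Prop :=
  ∀ f g h : G, f ∈ C → h ∈ C → r f g → r g h → g ∈ C

/-- The restriction of `r` to the subgroup `C` is Conradian. -/
def IsConradianOn {G : Type*} [Group G] (r : G → G → Prop) (C : Subgroup G) : Prop :=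
  ∀ f g : G, f ∈ C → g ∈ C → r 1 f → r 1 g → ∃ k : ℕ, r g (f * g ^ k)

/-- The group element represented by a single letter `σᵢ^{±1}`
(`true` = positive letter, `false` = inverse letter). -/
def letterB₃ (x : Fin 2 × Bool) : B₃ :=
  if x.2 then PresentedGroup.of x.1 else (PresentedGroup.of x.1)⁻¹

/-- An element of `B₃` is σ₁-positive if it is represented by some word in
`σ₁^{±1}, σ₂^{±1}` containing at least one `σ₁` and no `σ₁⁻¹`. -/
def IsSigmaOnePositive (β : B₃) : Prop :=
  ∃ w : List (Fin 2 × Bool),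
    (w.map letterB₃).prod = β ∧ ((0 : Fin 2), true) ∈ w ∧ ((0 : Fin 2), false) ∉ w

namespace IsLeftOrder

variable {G : Type*} [Group G] {r : G → G → Prop}

theorem lt_iff_one_lt_inv_mul (hr : IsLeftOrder r) {a b : G} : r a b ↔ r 1 (a⁻¹ * b) := by
  refine ⟨fun h => ?_, fun h => ?_⟩
  · simpa using hr.2 a⁻¹ a b h
  · simpa using hr.2 a 1 _ h

theorem one_lt_inv_of_lt_one (hr : IsLeftOrder r) {a : G} (h : r a 1) : r 1 a⁻¹ := by
  simpa using hr.lt_iff_one_lt_inv_mul.mp h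

theorem exists_one_lt_mem_of_lt (hr : IsLeftOrder r) {H C : Subgroup G} (hHC : H < C) :
    ∃ β ∈ C, β ∉ H ∧ r 1 β := by
  have := hr.1
  obtain ⟨β, hβC, hβH⟩ := SetLike.exists_of_lt hHC
  rcases trichotomous_of r 1 β with hβ | rfl | hβ
  · exact ⟨β, hβC, hβH, hβ⟩
  · exact absurd H.one_mem hβH
  · exact ⟨β⁻¹, inv_mem hβC, fun h => hβH (by simpa using inv_mem h),
      hr.one_lt_inv_of_lt_one hβ⟩

theorem isConradianOn_of_isMulCommutative (hr : IsLeftOrder r) (C : Subgroup G)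
    [IsMulCommutative C] : IsConradianOn r C := by
  intro f g hf hg hf1 _
  refine ⟨1, ?_⟩
  rw [pow_one, setLike_mul_comm hf hg]
  simpa using hr.2 g 1 f hf1

end IsLeftOrder

theorem sigma₁_mul_sigma₂_mul_sigma₁ : σ₁ * σ₂ * σ₁ = σ₂ * σ₁ * σ₂ := by
  have h : PresentedGroup.mk braidRels3
      (FreeGroup.of 0 * FreeGroup.of 1 * FreeGroup.of 0 *
        (FreeGroup.of 1 * FreeGroup.of 0 * FreeGroup.of 1)⁻¹) = 1 :=
    (QuotientGroup.eq_one_iff _).2 (Subgroup.subset_normalClosure rfl)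
  simp only [map_mul, map_inv] at h
  exact mul_inv_eq_one.mp h

theorem sigma₂_inv_pow_mul_sigma₁_mul_sigma₂ (n : ℕ) :
    σ₂⁻¹ ^ n * σ₁ * σ₂ = σ₁ * σ₂ * σ₁⁻¹ ^ n := by
  induction n with
  | zero => simp
  | succ n ih =>
    calc σ₂⁻¹ ^ (n + 1) * σ₁ * σ₂ = σ₂⁻¹ * (σ₂⁻¹ ^ n * σ₁ * σ₂) := by group
      _ = σ₂⁻¹ * (σ₁ * σ₂ * σ₁) * σ₁⁻¹ ^ (n + 1) := by rw [ih]; group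
      _ = σ₁ * σ₂ * σ₁⁻¹ ^ (n + 1) := by rw [sigma₁_mul_sigma₂_mul_sigma₁]; group

def sigmaOneNonneg : Submonoid B₃ where
  carrier := {β | ∃ w : List (Fin 2 × Bool), (w.map letterB₃).prod = β ∧ ((0 : Fin 2), false) ∉ w}
  one_mem' := ⟨[], by simp⟩
  mul_mem' := by
    rintro _ _ ⟨v, rfl, hv⟩ ⟨w, rfl, hw⟩
    exact ⟨v ++ w, by simp, by simp [hv, hw]⟩

theorem letter_mem_sigmaOneNonneg {x : Fin 2 × Bool} (hx : x ≠ ((0 : Fin 2), false)) :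
    letterB₃ x ∈ sigmaOneNonneg :=
  ⟨[x], by simp, by simpa using hx.symm⟩

theorem sigma₁_mem_sigmaOneNonneg : σ₁ ∈ sigmaOneNonneg :=
  letter_mem_sigmaOneNonneg (x := ((0 : Fin 2), true)) (by decide)

theorem sigma₂_mem_sigmaOneNonneg : σ₂ ∈ sigmaOneNonneg :=
  letter_mem_sigmaOneNonneg (x := ((1 : Fin 2), true)) (by decide)

theorem sigma₂_inv_mem_sigmaOneNonneg : σ₂⁻¹ ∈ sigmaOneNonneg :=
  letter_mem_sigmaOneNonneg (x := ((1 : Fin 2), false)) (by decide)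

theorem zpow_sigma₂_mem_sigmaOneNonneg (z : ℤ) : σ₂ ^ z ∈ sigmaOneNonneg := by
  obtain ⟨n, rfl | rfl⟩ := Int.eq_nat_or_neg z
  · simpa using pow_mem sigma₂_mem_sigmaOneNonneg n
  · simpa using pow_mem sigma₂_inv_mem_sigmaOneNonneg n

theorem isSigmaOnePositive_iff {β : B₃} :
    IsSigmaOnePositive β ↔ ∃ x ∈ sigmaOneNonneg, ∃ y ∈ sigmaOneNonneg, β = x * σ₁ * y := by
  constructor
  · rintro ⟨w, rfl, h1, hneg⟩
    obtain ⟨u, v, rfl⟩ := List.append_of_mem h1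
    simp only [List.mem_append, List.mem_cons, not_or] at hneg
    exact ⟨_, ⟨u, rfl, hneg.1⟩, _, ⟨v, rfl, hneg.2.2⟩, by simp [letterB₃, σ₁, mul_assoc]⟩
  · rintro ⟨_, ⟨u, rfl, hu⟩, _, ⟨v, rfl, hv⟩, rfl⟩
    exact ⟨u ++ ((0 : Fin 2), true) :: v, by simp [letterB₃, σ₁, mul_assoc], by simp,
      by simp [hu, hv]⟩

theorem IsSigmaOnePositive.mul_mem_sigmaOneNonneg {a b : B₃} (ha : IsSigmaOnePositive a)
    (hb : b ∈ sigmaOneNonneg) : IsSigmaOnePositive (a * b) := by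
  obtain ⟨x, hx, y, hy, rfl⟩ := isSigmaOnePositive_iff.mp ha
  exact isSigmaOnePositive_iff.mpr ⟨x, hx, y * b, mul_mem hy hb, by group⟩

theorem IsSigmaOnePositive.mem_sigmaOneNonneg {β : B₃} (h : IsSigmaOnePositive β) :
    β ∈ sigmaOneNonneg := by
  obtain ⟨x, hx, y, hy, rfl⟩ := isSigmaOnePositive_iff.mp h
  exact mul_mem (mul_mem hx sigma₁_mem_sigmaOneNonneg) hy

theorem isSigmaOnePositive_or_mem_zpowers {β : B₃} (h : β ∈ sigmaOneNonneg) :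
    IsSigmaOnePositive β ∨ β ∈ Subgroup.zpowers σ₂ := by
  obtain ⟨w, rfl, hneg⟩ := h
  by_cases hpos : ((0 : Fin 2), true) ∈ w
  · exact Or.inl ⟨w, rfl, hpos, hneg⟩
  · refine Or.inr (Subgroup.list_prod_mem _ ?_)
    simp only [List.mem_map]
    rintro _ ⟨⟨i, b⟩, hx, rfl⟩
    fin_cases i <;> cases b
    exacts [absurd hx hneg, absurd hx hpos, inv_mem (Subgroup.mem_zpowers σ₂),
      Subgroup.mem_zpowers σ₂]

def dehornoyCone : Set B₃ :=
  {β | IsSigmaOnePositive β} ∪ {β | ∃ k : ℕ, 1 ≤ k ∧ β = σ₂ ^ k}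

section DehornoyOrder

variable {r : B₃ → B₃ → Prop}

theorem one_lt_of_isSigmaOnePositive (hcone : {β | r 1 β} = dehornoyCone) {β : B₃}
    (h : IsSigmaOnePositive β) : r 1 β :=
  (Set.ext_iff.mp hcone β).mpr (Or.inl h)

theorem one_lt_sigma₂ (hcone : {β | r 1 β} = dehornoyCone) : r 1 σ₂ :=
  (Set.ext_iff.mp hcone σ₂).mpr (Or.inr ⟨1, le_rfl, (pow_one σ₂).symm⟩)

theorem isSigmaOnePositive_of_one_lt (hcone : {β | r 1 β} = dehornoyCone) {β : B₃}
    (h : r 1 β) (hβ : β ∉ Subgroup.zpowers σ₂) : IsSigmaOnePositive β := by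
  rcases (Set.ext_iff.mp hcone β).mp h with hpos | ⟨k, -, rfl⟩
  · exact hpos
  · exact absurd (pow_mem (Subgroup.mem_zpowers σ₂) k) hβ

theorem not_isSigmaOnePositive_of_mem_zpowers (hr : IsLeftOrder r)
    (hcone : {β | r 1 β} = dehornoyCone) {β : B₃} (hβ : β ∈ Subgroup.zpowers σ₂) :
    ¬ IsSigmaOnePositive β := by
  have := hr.1
  obtain ⟨z, rfl⟩ := hβ
  intro hz
  have hinv : IsSigmaOnePositive σ₂⁻¹ := by
    have h := hz.mul_mem_sigmaOneNonneg (zpow_sigma₂_mem_sigmaOneNonneg (-z - 1))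
    rwa [← zpow_add, show z + (-z - 1) = -1 by ring, zpow_neg_one] at h
  have hσ₂ : r σ₂ 1 := by simpa using hr.2 σ₂ 1 _ (one_lt_of_isSigmaOnePositive hcone hinv)
  exact irrefl _ (_root_.trans (one_lt_sigma₂ hcone) hσ₂)

theorem isConvexSubgroup_zpowers_sigma₂ (hr : IsLeftOrder r)
    (hcone : {β | r 1 β} = dehornoyCone) : IsConvexSubgroup r (Subgroup.zpowers σ₂) := by
  intro f g h hf hh hfg hgh
  rw [hr.lt_iff_one_lt_inv_mul] at hfg hgh
  by_cases hfg' : f⁻¹ * g ∈ Subgroup.zpowers σ₂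
  · simpa using mul_mem hf hfg'
  by_cases hgh' : g⁻¹ * h ∈ Subgroup.zpowers σ₂
  · simpa using mul_mem hh (inv_mem hgh')
  have hprod : IsSigmaOnePositive (f⁻¹ * g * (g⁻¹ * h)) :=
    (isSigmaOnePositive_of_one_lt hcone hfg hfg').mul_mem_sigmaOneNonneg
      (isSigmaOnePositive_of_one_lt hcone hgh hgh').mem_sigmaOneNonneg
  exact absurd hprod (not_isSigmaOnePositive_of_mem_zpowers hr hcone
    (by simpa using mul_mem (inv_mem hf) hh))

variable {C : Subgroup B₃}

theorem mem_of_mul_mem_of_mem_sigmaOneNonneg (hr : IsLeftOrder r)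
    (hcone : {β | r 1 β} = dehornoyCone) (hC : IsConvexSubgroup r C)
    (hσ₂ : σ₂ ∈ C) {a b : B₃} (ha : a ∈ sigmaOneNonneg) (hb : b ∈ sigmaOneNonneg)
    (hab : a * b ∈ C) : a ∈ C := by
  have hzpowers : Subgroup.zpowers σ₂ ≤ C := Subgroup.zpowers_le.mpr hσ₂
  rcases isSigmaOnePositive_or_mem_zpowers ha with ha | ha
  · rcases isSigmaOnePositive_or_mem_zpowers hb with hb | hb
    · refine hC 1 a (a * b) C.one_mem hab (one_lt_of_isSigmaOnePositive hcone ha) ?_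
      exact hr.lt_iff_one_lt_inv_mul.mpr (by simpa using one_lt_of_isSigmaOnePositive hcone hb)
    · simpa using mul_mem hab (inv_mem (hzpowers hb))
  · exact hzpowers ha

theorem sigma₁_mem_of_zpowers_lt (hr : IsLeftOrder r) (hcone : {β | r 1 β} = dehornoyCone)
    (hC : IsConvexSubgroup r C) (hlt : Subgroup.zpowers σ₂ < C) : σ₁ ∈ C := by
  have hσ₂ : σ₂ ∈ C := hlt.le (Subgroup.mem_zpowers σ₂)
  obtain ⟨β, hβC, hβ, hβpos⟩ := hr.exists_one_lt_mem_of_lt hlt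
  obtain ⟨x, hx, y, hy, rfl⟩ :=
    isSigmaOnePositive_iff.mp (isSigmaOnePositive_of_one_lt hcone hβpos hβ)
  have hxσ₁ : x * σ₁ ∈ C := mem_of_mul_mem_of_mem_sigmaOneNonneg hr hcone hC hσ₂
    (mul_mem hx sigma₁_mem_sigmaOneNonneg) hy hβC
  have hx' : x ∈ C :=
    mem_of_mul_mem_of_mem_sigmaOneNonneg hr hcone hC hσ₂ hx sigma₁_mem_sigmaOneNonneg hxσ₁
  simpa using mul_mem (inv_mem hx') hxσ₁

theorem not_isConradianOn_of_sigma₁_mem (hr : IsLeftOrder r)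
    (hcone : {β | r 1 β} = dehornoyCone) (hσ₁ : σ₁ ∈ C) (hσ₂ : σ₂ ∈ C) :
    ¬ IsConradianOn r C := by
  have := hr.1
  set f := σ₁ * σ₂ * σ₁⁻¹ ^ 2
  set g := σ₁ * σ₂ * σ₁⁻¹
  have hsop : ∀ n : ℕ, IsSigmaOnePositive (σ₁ * σ₂ * σ₁⁻¹ ^ n) := fun n =>
    isSigmaOnePositive_iff.mpr ⟨_, pow_mem sigma₂_inv_mem_sigmaOneNonneg n, _,
      sigma₂_mem_sigmaOneNonneg, (sigma₂_inv_pow_mul_sigma₁_mul_sigma₂ n).symm⟩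
  have hf : r 1 f := one_lt_of_isSigmaOnePositive hcone (hsop 2)
  have hg : r 1 g := by simpa using one_lt_of_isSigmaOnePositive hcone (hsop 1)
  intro hConrad
  have hσ₁inv : σ₁⁻¹ ∈ C := inv_mem hσ₁
  obtain ⟨k, hk⟩ := hConrad f g (mul_mem (mul_mem hσ₁ hσ₂) (pow_mem hσ₁inv 2))
    (mul_mem (mul_mem hσ₁ hσ₂) hσ₁inv) hf hg
  have hquot : (f * g ^ k)⁻¹ * g = σ₁ * σ₂⁻¹ ^ k := by
    simp only [f, g, conj_pow]
    group
  have hsop' : IsSigmaOnePositive (σ₁ * σ₂⁻¹ ^ k) := isSigmaOnePositive_iff.mpr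
    ⟨1, one_mem _, _, pow_mem sigma₂_inv_mem_sigmaOneNonneg k, by simp⟩
  have hlt : r (f * g ^ k) g := by
    rw [hr.lt_iff_one_lt_inv_mul, hquot]
    exact one_lt_of_isSigmaOnePositive hcone hsop'
  exact irrefl _ (_root_.trans hk hlt)

end DehornoyOrder

/-- For a left order on `B₃` whose positive cone consists exactly of the
σ₁-positive elements together with the positive powers of σ₂ (the Dehornoy
ordering), the subgroup `⟨σ₂⟩` is convex with Conradian restriction, while the
restriction to any strictly larger convex subgroup is not Conradian: `⟨σ₂⟩` is
the Conradian soul. -/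
theorem stmt_14 (r : B₃ → B₃ → Prop) (hr : IsLeftOrder r)
    (hcone : {β : B₃ | r 1 β} =
      {β : B₃ | IsSigmaOnePositive β} ∪ {β : B₃ | ∃ k : ℕ, 1 ≤ k ∧ β = σ₂ ^ k}) :
    IsConvexSubgroup r (Subgroup.zpowers σ₂) ∧
    IsConradianOn r (Subgroup.zpowers σ₂) ∧
    ∀ C : Subgroup B₃, IsConvexSubgroup r C → Subgroup.zpowers σ₂ < C →
      ¬ IsConradianOn r C := by
  refine ⟨isConvexSubgroup_zpowers_sigma₂ hr hcone,
    hr.isConradianOn_of_isMulCommutative _, fun C hC hlt => ?_⟩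
  exact not_isConradianOn_of_sigma₁_mem hr hcone (sigma₁_mem_of_zpowers_lt hr hcone hC hlt)
    (hlt.le (Subgroup.mem_zpowers σ₂))
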